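/- arXiv:1506.05498 — 3 statements merged into one kernel-verified Lean document; each statement's English description precedes it below -/
import Mathlib

section
/- The velocity field u(x,t) = (∑_{n=1}^∞ n^{-(3+γ)} sin(n(x₂ - σt)), σ) is a classical solution of the 2D incompressible Euler equations with constant pressure: ∂_t u + (u·∇)u = 0 and ∇·u = 0. -/
lemma series_hasDerivAt (γ : ℝ) (hγ1 : 1/2 < γ) (s : ℝ) :
    HasDerivAt (fun z => ∑' n : ℕ, ((n:ℝ)+1) ^ (-(3 + γ)) * Real.sin (((n:ℝ)+1) * z))
      (∑' n : ℕ, ((n:ℝ)+1) ^ (-(3 + γ)) * (((n:ℝ)+1) * Real.cos (((n:ℝ)+1) * s))) s := by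
  have hpos : ∀ n : ℕ, (0:ℝ) < (n:ℝ) + 1 := fun n => by positivity
  refine hasDerivAt_tsum (u := fun n : ℕ => ((n:ℝ)+1) ^ (-(2 + γ)))
    (g' := fun (n : ℕ) (y : ℝ) => ((n:ℝ)+1) ^ (-(3 + γ)) * (((n:ℝ)+1) * Real.cos (((n:ℝ)+1) * y)))
    (y₀ := 0) ?_ ?_ ?_ ?_ s
  · have : Summable (fun n : ℕ => ((n:ℝ)) ^ (-(2 + γ))) :=
      (Real.summable_nat_rpow (p := -(2+γ))).2 (by linarith)
    have h := (summable_nat_add_iff 1).2 this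
    simpa using h
  · intro n y
    have h1 : HasDerivAt (fun z : ℝ => ((n:ℝ)+1) * z) ((n:ℝ)+1) y := by
      simpa using (hasDerivAt_id y).const_mul ((n:ℝ)+1)
    have := ((Real.hasDerivAt_sin (((n:ℝ)+1) * y)).comp y h1).const_mul (((n:ℝ)+1) ^ (-(3 + γ)))
    simpa [Function.comp, mul_comm] using this
  · intro n y
    have hp := hpos n
    have h1 : ‖((n:ℝ)+1) ^ (-(3 + γ)) * (((n:ℝ)+1) * Real.cos (((n:ℝ)+1) * y))‖
        ≤ ((n:ℝ)+1) ^ (-(3 + γ)) * (((n:ℝ)+1) * 1) := by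
      rw [norm_mul, norm_mul, Real.norm_eq_abs, Real.norm_eq_abs, Real.norm_eq_abs,
        abs_of_pos (Real.rpow_pos_of_pos hp _), abs_of_pos hp]
      gcongr
      exact Real.abs_cos_le_one _
    calc ‖((n:ℝ)+1) ^ (-(3 + γ)) * (((n:ℝ)+1) * Real.cos (((n:ℝ)+1) * y))‖
        ≤ ((n:ℝ)+1) ^ (-(3 + γ)) * (((n:ℝ)+1) * 1) := h1
      _ = ((n:ℝ)+1) ^ (-(2 + γ)) := by
          rw [mul_one]
          nth_rewrite 2 [← Real.rpow_one ((n:ℝ)+1)]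
          rw [← Real.rpow_add hp]
          ring_nf
  · exact ⟨0, by simpa using hasSum_zero⟩

/-- The field `u = (∑ n⁻⁽³⁺ᵞ⁾ sin(n(x₂ - σt)), σ)` solves 2D Euler with constant
pressure: `∂ₜu + (u·∇)u = 0` and `∇·u = 0`. -/
theorem stmt2 (γ σ : ℝ) (hγ1 : 1/2 < γ) (hγ2 : γ ≤ 1) :
    let u1 : ℝ → ℝ → ℝ → ℝ := fun _x1 x2 t =>
      ∑' n : ℕ, ((n:ℝ)+1) ^ (-(3 + γ)) * Real.sin (((n:ℝ)+1) * (x2 - σ * t))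
    let u2 : ℝ → ℝ → ℝ → ℝ := fun _ _ _ => σ
    ∀ x1 x2 t : ℝ,
      (deriv (fun τ => u1 x1 x2 τ) t
          + u1 x1 x2 t * deriv (fun a => u1 a x2 t) x1
          + u2 x1 x2 t * deriv (fun b => u1 x1 b t) x2 = 0) ∧
      (deriv (fun τ => u2 x1 x2 τ) t
          + u1 x1 x2 t * deriv (fun a => u2 a x2 t) x1
          + u2 x1 x2 t * deriv (fun b => u2 x1 b t) x2 = 0) ∧
      (deriv (fun a => u1 a x2 t) x1 + deriv (fun b => u2 x1 b t) x2 = 0) := by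
  intro u1 u2 x1 x2 t
  set s := x2 - σ * t with hs
  set D := ∑' n : ℕ, ((n:ℝ)+1) ^ (-(3 + γ)) * (((n:ℝ)+1) * Real.cos (((n:ℝ)+1) * s)) with hD
  have hF := series_hasDerivAt γ hγ1 s
  have ht : HasDerivAt (fun τ => u1 x1 x2 τ) (D * (-σ)) t := by
    have hin : HasDerivAt (fun τ : ℝ => x2 - σ * τ) (-σ) t := by
      simpa using ((hasDerivAt_id t).const_mul σ).const_sub x2
    exact hF.comp t hin
  have hx2 : HasDerivAt (fun b => u1 x1 b t) (D * 1) x2 := by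
    have hin : HasDerivAt (fun b : ℝ => b - σ * t) 1 x2 := by
      simpa using (hasDerivAt_id x2).sub_const (σ * t)
    exact hF.comp x2 hin
  have hx1 : deriv (fun a => u1 a x2 t) x1 = 0 := by
    simp [u1, deriv_const]
  refine ⟨?_, ?_, ?_⟩
  · rw [ht.deriv, hx2.deriv, hx1]
    ring
  · simp [u2]
  · simp [u2, hx1]
end

section
/- (Cauchy's theorem for Euler.) Let u be a smooth solution of the incompressible Euler equations, ξ its flow map, and Ω_{ij} = u_{i,j} - u_{j,i} the vorticity tensor. Then ∂_t(ξ_{m,i} Ω_{mk}(ξ(x,t),t) ξ_{k,j}) = 0, hence ξ_{m,i}(x,t) Ω_{mk}(ξ(x,t),t) ξ_{k,j}(x,t) = Ω_{ij}(x,0) for all t. -/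
namespace Stmt18Aux
variable {d : ℕ}
local notation "E" => (Fin d → ℝ)
local notation "P" => ((Fin d → ℝ) × ℝ)

theorem sliceF (f : P → ℝ) (hf : ContDiff ℝ (⊤ : ℕ∞) f) (x : E) (t : ℝ) (v : E) :
    fderiv ℝ (fun y => f (y, t)) x v = fderiv ℝ f (x, t) (v, 0) := by
  have h1 : HasFDerivAt (fun y : E => (y, t)) ((ContinuousLinearMap.id ℝ E).prod 0) x :=
    (hasFDerivAt_id x).prodMk (hasFDerivAt_const t x)
  have h2 := (hf.differentiable (by simp) (x, t)).hasFDerivAt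
  have h3 : HasFDerivAt (fun y => f (y, t))
      ((fderiv ℝ f (x, t)).comp ((ContinuousLinearMap.id ℝ E).prod 0)) x := h2.comp x h1
  rw [h3.fderiv]; rfl

theorem sliceT (f : P → ℝ) (hf : ContDiff ℝ (⊤ : ℕ∞) f) (x : E) (t : ℝ) :
    HasDerivAt (fun τ => f (x, τ)) (fderiv ℝ f (x, t) (0, 1)) t := by
  have h1 : HasDerivAt (fun τ : ℝ => ((x, τ) : P)) (0, 1) t :=
    ((hasDerivAt_const t x).prodMk (hasDerivAt_id t))
  exact ((hf.differentiable (by simp) (x, t)).hasFDerivAt).comp_hasDerivAt t h1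

theorem sliceCD (f : P → ℝ) (hf : ContDiff ℝ (⊤ : ℕ∞) f) (t : ℝ) :
    ContDiff ℝ (⊤ : ℕ∞) (fun y : E => f (y, t)) :=
  hf.comp (contDiff_id.prodMk contDiff_const)

theorem smoothD (f : P → ℝ) (hf : ContDiff ℝ (⊤ : ℕ∞) f) : ContDiff ℝ (⊤ : ℕ∞) (fderiv ℝ f) :=
  hf.fderiv_right (by simp)

theorem smoothDapp (f : P → ℝ) (hf : ContDiff ℝ (⊤ : ℕ∞) f) (c : P) :
    ContDiff ℝ (⊤ : ℕ∞) (fun p => fderiv ℝ f p c) :=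
  (ContinuousLinearMap.apply ℝ ℝ c).contDiff.comp (smoothD f hf)

theorem symm2 (f : P → ℝ) (hf : ContDiff ℝ (⊤ : ℕ∞) f) (q : P) (a b : P) :
    fderiv ℝ (fderiv ℝ f) q a b = fderiv ℝ (fderiv ℝ f) q b a :=
  ((hf.contDiffAt (x := q)).isSymmSndFDerivAt (by rw [minSmoothness_of_isRCLikeNormedField]; exact WithTop.coe_le_coe.mpr le_top)) a b

theorem appD (f : P → ℝ) (hf : ContDiff ℝ (⊤ : ℕ∞) f) (c : P) (q a : P) :
    fderiv ℝ (fun p => fderiv ℝ f p c) q a = fderiv ℝ (fderiv ℝ f) q a c := by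
  have h1 : DifferentiableAt ℝ (fderiv ℝ f) q := (smoothD f hf).differentiable (by simp) q
  rw [fderiv_clm_apply h1 (differentiableAt_const c)]
  simp

theorem clmE_decomp (T : E →L[ℝ] ℝ) (w : E) :
    T w = ∑ l, w l * T (Pi.single l 1) := by
  conv_lhs => rw [← Finset.univ_sum_single w]
  rw [map_sum]
  refine Finset.sum_congr rfl fun l _ => ?_
  have : (Pi.single l (w l) : E) = w l • (Pi.single l 1 : E) := by
    simp [← Pi.single_smul]
  rw [this, map_smul, smul_eq_mul]

theorem clmP_decomp (T : P →L[ℝ] ℝ) (w : E) :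
    T (w, 1) = T (0, 1) + ∑ l, w l * T (Pi.single l 1, 0) := by
  have hw : ((w, 1) : P) = (0, 1) + ∑ l, (w l • (Pi.single l 1 : E), (0:ℝ)) := by
    ext r
    · rw [Prod.fst_add, Prod.fst_sum]
      simp [Finset.sum_apply, Pi.single_apply, mul_ite, Finset.sum_ite_eq]
    · simp [Prod.snd_sum]
  rw [hw, map_add, map_sum]
  congr 1
  refine Finset.sum_congr rfl fun l _ => ?_
  have : (w l • (Pi.single l 1 : E), (0:ℝ)) = w l • ((Pi.single l 1 : E), (0:ℝ)) := by
    simp [Prod.smul_mk]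
  rw [this, map_smul, smul_eq_mul]


section Concrete
variable (u : (Fin d → ℝ) → ℝ → (Fin d → ℝ)) (ξ : (Fin d → ℝ) → ℝ → (Fin d → ℝ))

theorem Scomp (hu : ContDiff ℝ (⊤ : ℕ∞) (fun p : P => u p.1 p.2)) (x : E) (t : ℝ) (m : Fin d) (v : E) :
    fderiv ℝ (fun y => u y t m) x v = fderiv ℝ (fun p : P => u p.1 p.2 m) (x, t) (v, 0) :=
  sliceF _ (contDiff_pi.1 hu m) x t v

theorem sliceDiff (hξ : ContDiff ℝ (⊤ : ℕ∞) (fun p : P => ξ p.1 p.2)) (t : ℝ) :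
    Differentiable ℝ (fun y => ξ y t) :=
  (hξ.comp (contDiff_id.prodMk contDiff_const)).differentiable (by simp)

theorem Jcomp (hξ : ContDiff ℝ (⊤ : ℕ∞) (fun p : P => ξ p.1 p.2)) (x : E) (t : ℝ) (m : Fin d) (v : E) :
    fderiv ℝ (fun y => ξ y t) x v m = fderiv ℝ (fun p : P => ξ p.1 p.2 m) (x, t) (v, 0) := by
  have hdiff : DifferentiableAt ℝ (fun y => ξ y t) x := sliceDiff ξ hξ t x
  have h2 := ((ContinuousLinearMap.proj (R := ℝ) (φ := fun _ : Fin d => ℝ)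
      m).hasFDerivAt.comp x hdiff.hasFDerivAt).fderiv
  have h3 : fderiv ℝ (fun y => ξ y t m) x v = fderiv ℝ (fun y => ξ y t) x v m := by
    rw [show (fun y => ξ y t m) = (ContinuousLinearMap.proj (R := ℝ)
        (φ := fun _ : Fin d => ℝ) m) ∘ (fun y => ξ y t) from rfl, h2]; rfl
  rw [← h3]
  exact sliceF _ (contDiff_pi.1 hξ m) x t v

/-- F1: evolution of the Jacobian along the flow. -/
theorem flowJac (hu : ContDiff ℝ (⊤ : ℕ∞) (fun p : P => u p.1 p.2))
    (hξ : ContDiff ℝ (⊤ : ℕ∞) (fun p : P => ξ p.1 p.2))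
    (hflow : ∀ (x : E) (t : ℝ), HasDerivAt (fun τ => ξ x τ) (u (ξ x t) t) t)
    (x : E) (t : ℝ) (m i : Fin d) :
    HasDerivAt (fun τ => fderiv ℝ (fun y => ξ y τ) x (Pi.single i 1) m)
      (∑ l, fderiv ℝ (fun y => ξ y t) x (Pi.single i 1) l *
        fderiv ℝ (fun z => u z t m) (ξ x t) (Pi.single l 1)) t := by
  set Ξm : P → ℝ := fun p => ξ p.1 p.2 m with hΞdef
  have hΞ : ContDiff ℝ (⊤ : ℕ∞) Ξm := contDiff_pi.1 hξ m
  have hfun : (fun τ => fderiv ℝ (fun y => ξ y τ) x (Pi.single i 1) m)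
      = fun τ => fderiv ℝ Ξm (x, τ) ((Pi.single i 1 : E), (0:ℝ)) := by
    funext τ; exact Jcomp ξ hξ x τ m (Pi.single i 1)
  rw [hfun]
  have hg := sliceT (fun p => fderiv ℝ Ξm p ((Pi.single i 1 : E), (0:ℝ)))
      (smoothDapp Ξm hΞ _) x t
  -- rewrite the derivative value
  have hval : fderiv ℝ (fun p => fderiv ℝ Ξm p ((Pi.single i 1 : E), (0:ℝ))) (x, t) (0, 1)
      = ∑ l, fderiv ℝ (fun y => ξ y t) x (Pi.single i 1) l *
          fderiv ℝ (fun z => u z t m) (ξ x t) (Pi.single l 1) := by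
    rw [appD Ξm hΞ _ _ _, symm2 Ξm hΞ, ← appD Ξm hΞ _ _ _]
    have hfl : (fun p : P => fderiv ℝ Ξm p ((0:E), (1:ℝ)))
        = fun p : P => u (ξ p.1 p.2) p.2 m := by
      funext p
      have h1 := sliceT Ξm hΞ p.1 p.2
      have h2 : HasDerivAt (fun τ => ξ p.1 τ m) (u (ξ p.1 p.2) p.2 m) p.2 :=
        (ContinuousLinearMap.proj (R := ℝ) (φ := fun _ : Fin d => ℝ)
          m).hasFDerivAt.comp_hasDerivAt p.2 (hflow p.1 p.2)
      exact h1.unique h2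
    rw [hfl]
    have hcm : ContDiff ℝ (⊤ : ℕ∞) (fun p : P => u (ξ p.1 p.2) p.2 m) :=
      (contDiff_pi.1 hu m).comp (hξ.prodMk contDiff_snd)
    rw [← sliceF _ hcm x t (Pi.single i 1)]
    -- chain rule in space
    have hd1 : DifferentiableAt ℝ (fun z => u z t m) (ξ x t) :=
      (sliceCD _ (contDiff_pi.1 hu m) t).differentiable (by simp) (ξ x t)
    have hd2 : DifferentiableAt ℝ (fun y => ξ y t) x := sliceDiff ξ hξ t x
    have hcomp : fderiv ℝ (fun y => u (ξ y t) t m) x =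
        (fderiv ℝ (fun z => u z t m) (ξ x t)).comp (fderiv ℝ (fun y => ξ y t) x) :=
      fderiv_comp (g := fun z => u z t m) x hd1 hd2
    rw [hcomp]
    have := clmE_decomp (fderiv ℝ (fun z => u z t m) (ξ x t))
      (fderiv ℝ (fun y => ξ y t) x (Pi.single i 1))
    simpa using this
  rw [hval] at hg
  exact hg


variable (pr : (Fin d → ℝ) → ℝ → ℝ)

/-- Differentiated Euler equation (index pair (m,k)). -/
theorem eulerDiff (hu : ContDiff ℝ (⊤ : ℕ∞) (fun p : P => u p.1 p.2))
    (hpr : ContDiff ℝ (⊤ : ℕ∞) (fun p : P => pr p.1 p.2))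
    (heuler : ∀ (x : E) (t : ℝ) (i : Fin d),
      deriv (fun τ => u x τ i) t
        + ∑ j, u x t j * fderiv ℝ (fun y => u y t i) x (Pi.single j 1)
      = -(fderiv ℝ (fun y => pr y t) x (Pi.single i 1)))
    (x : E) (t : ℝ) (m k : Fin d) :
    fderiv ℝ (fderiv ℝ (fun p : P => u p.1 p.2 m)) (x, t) ((Pi.single k 1 : E), (0:ℝ)) ((0:E), 1)
      + ∑ l, (u x t l * fderiv ℝ (fderiv ℝ (fun p : P => u p.1 p.2 m)) (x, t)
            ((Pi.single k 1 : E), (0:ℝ)) ((Pi.single l 1 : E), (0:ℝ))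
          + fderiv ℝ (fun y => u y t l) x (Pi.single k 1)
            * fderiv ℝ (fun y => u y t m) x (Pi.single l 1))
    = - fderiv ℝ (fderiv ℝ (fun p : P => pr p.1 p.2)) (x, t)
        ((Pi.single k 1 : E), (0:ℝ)) ((Pi.single m 1 : E), (0:ℝ)) := by
  set Um : P → ℝ := fun p => u p.1 p.2 m with hUmdef
  set Pr : P → ℝ := fun p => pr p.1 p.2 with hPrdef
  have hUm : ContDiff ℝ (⊤ : ℕ∞) Um := contDiff_pi.1 hu m
  have hEuler' : (fun y : E => fderiv ℝ Um (y, t) ((0:E), (1:ℝ))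
        + ∑ l, u y t l * fderiv ℝ Um (y, t) ((Pi.single l 1 : E), (0:ℝ)))
      = fun y : E => -fderiv ℝ Pr (y, t) ((Pi.single m 1 : E), (0:ℝ)) := by
    funext y
    have h0 := heuler y t m
    have h1 : deriv (fun τ => u y τ m) t = fderiv ℝ Um (y, t) ((0:E), 1) :=
      (sliceT Um hUm y t).deriv
    have h3 : fderiv ℝ (fun z => pr z t) y (Pi.single m 1)
        = fderiv ℝ Pr (y, t) ((Pi.single m 1 : E), (0:ℝ)) := sliceF Pr hpr y t _
    rw [h1, h3] at h0
    rw [← h0]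
    congr 1
    exact Finset.sum_congr rfl fun l _ => by rw [Scomp u hu y t m (Pi.single l 1)]
  have hD := congrArg (fun (g : E → ℝ) => fderiv ℝ g x (Pi.single k 1)) hEuler'
  -- differentiability facts
  have hdT : ∀ c : P, DifferentiableAt ℝ (fun y : E => fderiv ℝ Um (y, t) c) x :=
    fun c => (sliceCD _ (smoothDapp Um hUm c) t).differentiable (by simp) x
  have hdu : ∀ l : Fin d, DifferentiableAt ℝ (fun y => u y t l) x :=
    fun l => (sliceCD _ (contDiff_pi.1 hu l) t).differentiable (by simp) x
  have hfT : ∀ c : P, fderiv ℝ (fun y : E => fderiv ℝ Um (y, t) c) x (Pi.single k 1)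
      = fderiv ℝ (fderiv ℝ Um) (x, t) ((Pi.single k 1 : E), (0:ℝ)) c := by
    intro c
    rw [sliceF _ (smoothDapp Um hUm c) x t, appD Um hUm]
  -- compute LHS of hD
  have hL : fderiv ℝ (fun y : E => fderiv ℝ Um (y, t) ((0:E), (1:ℝ))
        + ∑ l, u y t l * fderiv ℝ Um (y, t) ((Pi.single l 1 : E), (0:ℝ))) x (Pi.single k 1)
      = fderiv ℝ (fderiv ℝ Um) (x, t) ((Pi.single k 1 : E), (0:ℝ)) ((0:E), 1)
        + ∑ l, (u x t l * fderiv ℝ (fderiv ℝ Um) (x, t) ((Pi.single k 1 : E), (0:ℝ))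
              ((Pi.single l 1 : E), (0:ℝ))
            + fderiv ℝ (fun y => u y t l) x (Pi.single k 1)
              * fderiv ℝ (fun y => u y t m) x (Pi.single l 1)) := by
    have hdsum : DifferentiableAt ℝ
        (fun y : E => ∑ l, u y t l * fderiv ℝ Um (y, t) ((Pi.single l 1 : E), (0:ℝ))) x :=
      DifferentiableAt.fun_sum fun l _ => (hdu l).mul (hdT _)
    rw [fderiv_fun_add (hdT _) hdsum]
    simp only [ContinuousLinearMap.add_apply]
    congr 1
    · exact hfT _
    · rw [fderiv_fun_sum (fun l _ => (hdu l).fun_mul (hdT _))]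
      rw [ContinuousLinearMap.sum_apply]
      refine Finset.sum_congr rfl fun l _ => ?_
      rw [fderiv_fun_mul (hdu l) (hdT _)]
      simp only [ContinuousLinearMap.add_apply, ContinuousLinearMap.smul_apply, smul_eq_mul]
      rw [hfT]
      have : fderiv ℝ Um (x, t) ((Pi.single l 1 : E), (0:ℝ))
          = fderiv ℝ (fun y => u y t m) x (Pi.single l 1) :=
        (Scomp u hu x t m (Pi.single l 1)).symm
      rw [this]; ring
  -- compute RHS of hD
  have hR : fderiv ℝ (fun y : E => -fderiv ℝ Pr (y, t) ((Pi.single m 1 : E), (0:ℝ))) x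
        (Pi.single k 1)
      = - fderiv ℝ (fderiv ℝ Pr) (x, t) ((Pi.single k 1 : E), (0:ℝ))
          ((Pi.single m 1 : E), (0:ℝ)) := by
    rw [fderiv_fun_neg]
    simp only [ContinuousLinearMap.neg_apply, neg_inj]
    rw [sliceF _ (smoothDapp Pr hpr _) x t, appD Pr hpr]
  rw [hL, hR] at hD
  exact hD


/-- F2: evolution of the vorticity tensor along a trajectory. -/
theorem vortDeriv (hu : ContDiff ℝ (⊤ : ℕ∞) (fun p : P => u p.1 p.2))
    (hpr : ContDiff ℝ (⊤ : ℕ∞) (fun p : P => pr p.1 p.2))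
    (heuler : ∀ (x : E) (t : ℝ) (i : Fin d),
      deriv (fun τ => u x τ i) t
        + ∑ j, u x t j * fderiv ℝ (fun y => u y t i) x (Pi.single j 1)
      = -(fderiv ℝ (fun y => pr y t) x (Pi.single i 1)))
    (hξ : ContDiff ℝ (⊤ : ℕ∞) (fun p : P => ξ p.1 p.2))
    (hflow : ∀ (x : E) (t : ℝ), HasDerivAt (fun τ => ξ x τ) (u (ξ x t) t) t)
    (x : E) (t : ℝ) (m k : Fin d) :
    HasDerivAt (fun τ => fderiv ℝ (fun y => u y τ m) (ξ x τ) (Pi.single k 1)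
        - fderiv ℝ (fun y => u y τ k) (ξ x τ) (Pi.single m 1))
      (-∑ l, (fderiv ℝ (fun y => u y t l) (ξ x t) (Pi.single k 1)
            * fderiv ℝ (fun y => u y t m) (ξ x t) (Pi.single l 1)
          - fderiv ℝ (fun y => u y t l) (ξ x t) (Pi.single m 1)
            * fderiv ℝ (fun y => u y t k) (ξ x t) (Pi.single l 1))) t := by
  set Um : P → ℝ := fun p => u p.1 p.2 m with hUmdef
  set Uk : P → ℝ := fun p => u p.1 p.2 k with hUkdef
  have hUm : ContDiff ℝ (⊤ : ℕ∞) Um := contDiff_pi.1 hu m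
  have hUk : ContDiff ℝ (⊤ : ℕ∞) Uk := contDiff_pi.1 hu k
  set ek : P := ((Pi.single k 1 : E), (0:ℝ)) with hekdef
  set em : P := ((Pi.single m 1 : E), (0:ℝ)) with hemdef
  set Ωf : P → ℝ := fun p => fderiv ℝ Um p ek - fderiv ℝ Uk p em with hΩdef
  have hΩsm : ContDiff ℝ (⊤ : ℕ∞) Ωf := (smoothDapp Um hUm ek).sub (smoothDapp Uk hUk em)
  have hfun : (fun τ => fderiv ℝ (fun y => u y τ m) (ξ x τ) (Pi.single k 1)
      - fderiv ℝ (fun y => u y τ k) (ξ x τ) (Pi.single m 1))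
      = fun τ => Ωf (ξ x τ, τ) := by
    funext τ
    rw [hΩdef]
    simp only
    rw [Scomp u hu (ξ x τ) τ m (Pi.single k 1), Scomp u hu (ξ x τ) τ k (Pi.single m 1)]
  rw [hfun]
  have hγ : HasDerivAt (fun τ => ((ξ x τ, τ) : P)) (u (ξ x t) t, 1) t :=
    (hflow x t).prodMk (hasDerivAt_id t)
  set q : P := (ξ x t, t) with hqdef
  have hW : HasDerivAt (fun τ => Ωf (ξ x τ, τ)) (fderiv ℝ Ωf q (u (ξ x t) t, 1)) t := by
    have h := HasFDerivAt.comp_hasDerivAt_of_eq t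
      ((hΩsm.differentiable (by simp) q).hasFDerivAt) hγ rfl
    exact h
  -- now compute the derivative value
  have hval : fderiv ℝ Ωf q (u (ξ x t) t, 1)
      = -∑ l, (fderiv ℝ (fun y => u y t l) (ξ x t) (Pi.single k 1)
            * fderiv ℝ (fun y => u y t m) (ξ x t) (Pi.single l 1)
          - fderiv ℝ (fun y => u y t l) (ξ x t) (Pi.single m 1)
            * fderiv ℝ (fun y => u y t k) (ξ x t) (Pi.single l 1)) := by
    set w : E := u (ξ x t) t with hwdef
    have hsub : fderiv ℝ Ωf q = fderiv ℝ (fun p => fderiv ℝ Um p ek) q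
        - fderiv ℝ (fun p => fderiv ℝ Uk p em) q := by
      rw [hΩdef]
      exact fderiv_fun_sub ((smoothDapp Um hUm ek).differentiable (by simp) q)
        ((smoothDapp Uk hUk em).differentiable (by simp) q)
    rw [hsub]
    simp only [ContinuousLinearMap.sub_apply]
    rw [appD Um hUm ek q _, appD Uk hUk em q _]
    -- decompose the direction (w,1)
    have hdm : fderiv ℝ (fderiv ℝ Um) q (w, 1) ek
        = fderiv ℝ (fderiv ℝ Um) q ((0:E), 1) ek
          + ∑ l, w l * fderiv ℝ (fderiv ℝ Um) q ((Pi.single l 1 : E), (0:ℝ)) ek := by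
      exact clmP_decomp ((fderiv ℝ (fderiv ℝ Um) q).flip ek) w
    have hdk : fderiv ℝ (fderiv ℝ Uk) q (w, 1) em
        = fderiv ℝ (fderiv ℝ Uk) q ((0:E), 1) em
          + ∑ l, w l * fderiv ℝ (fderiv ℝ Uk) q ((Pi.single l 1 : E), (0:ℝ)) em := by
      exact clmP_decomp ((fderiv ℝ (fderiv ℝ Uk) q).flip em) w
    rw [hdm, hdk]
    -- use the symmetry of second derivatives to reorder arguments
    have hsm : ∀ a : P, fderiv ℝ (fderiv ℝ Um) q a ek = fderiv ℝ (fderiv ℝ Um) q ek a :=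
      fun a => symm2 Um hUm q a ek
    have hsk : ∀ a : P, fderiv ℝ (fderiv ℝ Uk) q a em = fderiv ℝ (fderiv ℝ Uk) q em a :=
      fun a => symm2 Uk hUk q a em
    rw [hsm, hsk]
    simp only [fun l : Fin d => hsm ((Pi.single l 1 : E), (0:ℝ)),
      fun l : Fin d => hsk ((Pi.single l 1 : E), (0:ℝ))]
    -- apply the differentiated Euler equations
    have hEm := eulerDiff u pr hu hpr heuler (ξ x t) t m k
    have hEk := eulerDiff u pr hu hpr heuler (ξ x t) t k m
    have hPsym : fderiv ℝ (fderiv ℝ (fun p : P => pr p.1 p.2)) (ξ x t, t) ek em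
        = fderiv ℝ (fderiv ℝ (fun p : P => pr p.1 p.2)) (ξ x t, t) em ek :=
      symm2 _ hpr (ξ x t, t) ek em
    rw [hqdef]
    have expand : ∀ (D : Fin d → ℝ) (c : Fin d → ℝ) (S : Fin d → ℝ),
        ∑ l, (c l * D l + S l) = ∑ l, c l * D l + ∑ l, S l := fun D c S =>
      Finset.sum_add_distrib
    -- rearrange hEm, hEk into expressions for the pieces
    have hEm' : fderiv ℝ (fderiv ℝ Um) (ξ x t, t) ek ((0:E), 1)
        + ∑ l, w l * fderiv ℝ (fderiv ℝ Um) (ξ x t, t) ek ((Pi.single l 1 : E), (0:ℝ))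
        = - fderiv ℝ (fderiv ℝ (fun p : P => pr p.1 p.2)) (ξ x t, t) ek em
          - ∑ l, fderiv ℝ (fun y => u y t l) (ξ x t) (Pi.single k 1)
              * fderiv ℝ (fun y => u y t m) (ξ x t) (Pi.single l 1) := by
      rw [Finset.sum_add_distrib] at hEm
      rw [hwdef]
      linarith [hEm]
    have hEk' : fderiv ℝ (fderiv ℝ Uk) (ξ x t, t) em ((0:E), 1)
        + ∑ l, w l * fderiv ℝ (fderiv ℝ Uk) (ξ x t, t) em ((Pi.single l 1 : E), (0:ℝ))
        = - fderiv ℝ (fderiv ℝ (fun p : P => pr p.1 p.2)) (ξ x t, t) em ek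
          - ∑ l, fderiv ℝ (fun y => u y t l) (ξ x t) (Pi.single m 1)
              * fderiv ℝ (fun y => u y t k) (ξ x t) (Pi.single l 1) := by
      rw [Finset.sum_add_distrib] at hEk
      rw [hwdef]
      linarith [hEk]
    have hgoal := congrArg₂ (fun a b : ℝ => a - b) hEm' hEk'
    rw [show ∀ a b c e : ℝ, (a + b) - (c + e) = (a + b) - (c + e) from fun _ _ _ _ => rfl]
    calc fderiv ℝ (fderiv ℝ Um) (ξ x t, t) ek ((0:E), 1)
          + ∑ l, w l * fderiv ℝ (fderiv ℝ Um) (ξ x t, t) ek ((Pi.single l 1 : E), (0:ℝ))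
          - (fderiv ℝ (fderiv ℝ Uk) (ξ x t, t) em ((0:E), 1)
          + ∑ l, w l * fderiv ℝ (fderiv ℝ Uk) (ξ x t, t) em ((Pi.single l 1 : E), (0:ℝ)))
        = (- fderiv ℝ (fderiv ℝ (fun p : P => pr p.1 p.2)) (ξ x t, t) ek em
            - ∑ l, fderiv ℝ (fun y => u y t l) (ξ x t) (Pi.single k 1)
              * fderiv ℝ (fun y => u y t m) (ξ x t) (Pi.single l 1))
          - (- fderiv ℝ (fderiv ℝ (fun p : P => pr p.1 p.2)) (ξ x t, t) em ek
            - ∑ l, fderiv ℝ (fun y => u y t l) (ξ x t) (Pi.single m 1)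
              * fderiv ℝ (fun y => u y t k) (ξ x t) (Pi.single l 1)) := by
          rw [hEm', hEk']
      _ = -∑ l, (fderiv ℝ (fun y => u y t l) (ξ x t) (Pi.single k 1)
            * fderiv ℝ (fun y => u y t m) (ξ x t) (Pi.single l 1)
          - fderiv ℝ (fun y => u y t l) (ξ x t) (Pi.single m 1)
            * fderiv ℝ (fun y => u y t k) (ξ x t) (Pi.single l 1)) := by
          rw [hPsym, Finset.sum_sub_distrib]
          ring
  rw [hval] at hW
  exact hW


theorem swap13 (f : Fin d → Fin d → Fin d → ℝ) :
    (∑ m, ∑ k, ∑ l, f m k l) = ∑ m, ∑ k, ∑ l, f l k m := by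
  calc (∑ m, ∑ k, ∑ l, f m k l)
      = ∑ m, ∑ l, ∑ k, f m k l := Finset.sum_congr rfl fun m _ => Finset.sum_comm
    _ = ∑ l, ∑ m, ∑ k, f m k l := Finset.sum_comm
    _ = ∑ m, ∑ k, ∑ l, f l k m := Finset.sum_congr rfl fun _ _ => Finset.sum_comm

theorem swap23 (f : Fin d → Fin d → Fin d → ℝ) :
    (∑ m, ∑ k, ∑ l, f m k l) = ∑ m, ∑ k, ∑ l, f m l k :=
  Finset.sum_congr rfl fun _ _ => Finset.sum_comm

theorem cancel (A S W : Fin d → Fin d → ℝ) (i j : Fin d) :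
    ∑ m, ∑ k, (((∑ l, A l i * S m l) * W m k
        + A m i * (-∑ l, (W m l * S l k + S l m * W l k))) * A k j
      + A m i * W m k * (∑ l, A l j * S k l)) = 0 := by
  have hexp : ∀ m k : Fin d, ((∑ l, A l i * S m l) * W m k
        + A m i * (-∑ l, (W m l * S l k + S l m * W l k))) * A k j
      + A m i * W m k * (∑ l, A l j * S k l)
      = ((∑ l, A l i * S m l * W m k * A k j) - ((∑ l, A m i * W m l * S l k * A k j)
          + (∑ l, A m i * S l m * W l k * A k j)))
        + (∑ l, A m i * W m k * S k l * A l j) := by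
    intro m k
    have h1 : (∑ l, A l i * S m l * W m k * A k j) = (∑ l, A l i * S m l) * (W m k * A k j) := by
      rw [Finset.sum_mul]; exact Finset.sum_congr rfl fun l _ => by ring
    have h2 : (∑ l, A m i * W m l * S l k * A k j) + (∑ l, A m i * S l m * W l k * A k j)
        = (∑ l, (W m l * S l k + S l m * W l k)) * (A m i * A k j) := by
      rw [Finset.sum_mul, ← Finset.sum_add_distrib]
      exact Finset.sum_congr rfl fun l _ => by ring
    have h3 : (∑ l, A m i * W m k * S k l * A l j) = (∑ l, A l j * S k l) * (A m i * W m k) := by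
      rw [Finset.sum_mul]; exact Finset.sum_congr rfl fun l _ => by ring
    rw [h1, h2, h3]; ring
  calc ∑ m, ∑ k, (((∑ l, A l i * S m l) * W m k
        + A m i * (-∑ l, (W m l * S l k + S l m * W l k))) * A k j
      + A m i * W m k * (∑ l, A l j * S k l))
      = ∑ m, ∑ k, (((∑ l, A l i * S m l * W m k * A k j)
          - ((∑ l, A m i * W m l * S l k * A k j) + (∑ l, A m i * S l m * W l k * A k j)))
        + (∑ l, A m i * W m k * S k l * A l j)) := by
        exact Finset.sum_congr rfl fun m _ => Finset.sum_congr rfl fun k _ => hexp m k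
    _ = ((∑ m, ∑ k, ∑ l, A l i * S m l * W m k * A k j)
          - ((∑ m, ∑ k, ∑ l, A m i * W m l * S l k * A k j)
            + (∑ m, ∑ k, ∑ l, A m i * S l m * W l k * A k j)))
        + (∑ m, ∑ k, ∑ l, A m i * W m k * S k l * A l j) := by
        simp [Finset.sum_add_distrib, Finset.sum_sub_distrib]
    _ = 0 := by
        have s1 : (∑ m, ∑ k, ∑ l, A m i * S l m * W l k * A k j)
            = ∑ m, ∑ k, ∑ l, A l i * S m l * W m k * A k j :=
          swap13 (fun m k l => A m i * S l m * W l k * A k j)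
        have s2 : (∑ m, ∑ k, ∑ l, A m i * W m l * S l k * A k j)
            = ∑ m, ∑ k, ∑ l, A m i * W m k * S k l * A l j :=
          swap23 (fun m k l => A m i * W m l * S l k * A k j)
        rw [s1, s2]; ring

end Concrete
end Stmt18Aux

/-- Cauchy's theorem for Euler: along trajectories of a smooth incompressible Euler
solution, `ξ_{m,i} Ω_{mk}(ξ,t) ξ_{k,j}` is constant in time and equals `Ω_{ij}(x,0)`,
where `Ω_{ij} = ∂_j u_i - ∂_i u_j` is the vorticity tensor. -/
theorem stmt18 (d : ℕ)
    (u : (Fin d → ℝ) → ℝ → (Fin d → ℝ)) (pr : (Fin d → ℝ) → ℝ → ℝ)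
    (hu : ContDiff ℝ (⊤ : ℕ∞) (fun p : (Fin d → ℝ) × ℝ => u p.1 p.2))
    (hpr : ContDiff ℝ (⊤ : ℕ∞) (fun p : (Fin d → ℝ) × ℝ => pr p.1 p.2))
    (heuler : ∀ (x : Fin d → ℝ) (t : ℝ) (i : Fin d),
      deriv (fun τ => u x τ i) t
        + ∑ j, u x t j * fderiv ℝ (fun y => u y t i) x (Pi.single j 1)
      = -(fderiv ℝ (fun y => pr y t) x (Pi.single i 1)))
    (hdiv : ∀ (x : Fin d → ℝ) (t : ℝ),
      ∑ i, fderiv ℝ (fun y => u y t i) x (Pi.single i 1) = 0)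
    (ξ : (Fin d → ℝ) → ℝ → (Fin d → ℝ))
    (hξ : ContDiff ℝ (⊤ : ℕ∞) (fun p : (Fin d → ℝ) × ℝ => ξ p.1 p.2))
    (hflow : ∀ (x : Fin d → ℝ) (t : ℝ), HasDerivAt (fun τ => ξ x τ) (u (ξ x t) t) t)
    (hinit : ∀ x, ξ x 0 = x) :
    let Ω : (Fin d → ℝ) → ℝ → Fin d → Fin d → ℝ := fun x t i j =>
      fderiv ℝ (fun y => u y t i) x (Pi.single j 1)
        - fderiv ℝ (fun y => u y t j) x (Pi.single i 1)
    let J : (Fin d → ℝ) → ℝ → Fin d → Fin d → ℝ := fun x t i j =>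
      fderiv ℝ (fun y => ξ y t) x (Pi.single j 1) i
    ∀ (x : Fin d → ℝ) (t : ℝ) (i j : Fin d),
      (deriv (fun τ => ∑ m, ∑ k, J x τ m i * Ω (ξ x τ) τ m k * J x τ k j) t = 0) ∧
      (∑ m, ∑ k, J x t m i * Ω (ξ x t) t m k * J x t k j = Ω x 0 i j) := by
  intro Ω J x t i j
  have heuler' : ∀ (x : Fin d → ℝ) (t : ℝ) (i : Fin d),
      deriv (fun τ => u x τ i) t
        + ∑ j, u x t j * fderiv ℝ (fun y => u y t i) x (Pi.single j 1)
      = -(fderiv ℝ (fun y => pr y t) x (Pi.single i 1)) := heuler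
  -- the key fact: the Cauchy invariant has zero derivative everywhere
  have H : ∀ s : ℝ, HasDerivAt
      (fun τ => ∑ m, ∑ k, J x τ m i * Ω (ξ x τ) τ m k * J x τ k j) 0 s := by
    intro s
    classical
    set A : Fin d → Fin d → ℝ :=
      fun a b => fderiv ℝ (fun y => ξ y s) x (Pi.single b 1) a with hA
    set S : Fin d → Fin d → ℝ :=
      fun a b => fderiv ℝ (fun z => u z s a) (ξ x s) (Pi.single b 1) with hS
    set W : Fin d → Fin d → ℝ := fun a b => S a b - S b a with hW
    have hJd : ∀ (m i' : Fin d), HasDerivAt (fun τ => J x τ m i') (∑ l, A l i' * S m l) s :=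
      fun m i' => Stmt18Aux.flowJac u ξ hu hξ hflow x s m i'
    have hWd : ∀ (m k : Fin d), HasDerivAt (fun τ => Ω (ξ x τ) τ m k)
        (-∑ l, (S l k * S m l - S l m * S k l)) s :=
      fun m k => Stmt18Aux.vortDeriv u ξ pr hu hpr heuler hξ hflow x s m k
    have Hsum : HasDerivAt (fun τ => ∑ m, ∑ k, J x τ m i * Ω (ξ x τ) τ m k * J x τ k j)
        (∑ m, ∑ k, (((∑ l, A l i * S m l) * W m k
            + A m i * (-∑ l, (S l k * S m l - S l m * S k l))) * A k j
          + A m i * W m k * (∑ l, A l j * S k l))) s := by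
      refine HasDerivAt.fun_sum fun m _ => HasDerivAt.fun_sum fun k _ => ?_
      have h := ((hJd m i).mul (hWd m k)).mul (hJd k j)
      have hJs : ∀ a b : Fin d, J x s a b = A a b := fun a b => rfl
      have hΩs : ∀ a b : Fin d, Ω (ξ x s) s a b = W a b := fun a b => rfl
      rw [hJs, hΩs, hJs] at h
      exact h
    have hzero : (∑ m, ∑ k, (((∑ l, A l i * S m l) * W m k
            + A m i * (-∑ l, (S l k * S m l - S l m * S k l))) * A k j
          + A m i * W m k * (∑ l, A l j * S k l))) = 0 := by
      have hc := Stmt18Aux.cancel A S W i j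
      rw [← hc]
      refine Finset.sum_congr rfl fun m _ => Finset.sum_congr rfl fun k _ => ?_
      have : (∑ l, (S l k * S m l - S l m * S k l))
          = ∑ l, (W m l * S l k + S l m * W l k) :=
        Finset.sum_congr rfl fun l _ => by rw [hW]; ring
      rw [this]
    rw [hzero] at Hsum
    exact Hsum
  constructor
  · exact (H t).deriv
  · have hdiffF : Differentiable ℝ
        (fun τ => ∑ m, ∑ k, J x τ m i * Ω (ξ x τ) τ m k * J x τ k j) :=
      fun s => (H s).differentiableAt
    have hconst := is_const_of_deriv_eq_zero hdiffF (fun s => (H s).deriv) t 0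
    rw [hconst]
    -- evaluate at time 0
    have hxi0 : (fun y : Fin d → ℝ => ξ y 0) = fun y => y := funext hinit
    have hJ0 : ∀ a b : Fin d, J x 0 a b = (Pi.single b 1 : Fin d → ℝ) a := by
      intro a b
      show fderiv ℝ (fun y => ξ y 0) x (Pi.single b 1) a = (Pi.single b 1 : Fin d → ℝ) a
      rw [hxi0, fderiv_id']
      rfl
    have hx0 : ξ x 0 = x := hinit x
    calc (∑ m, ∑ k, J x 0 m i * Ω (ξ x 0) 0 m k * J x 0 k j)
        = ∑ m, ∑ k, (Pi.single i 1 : Fin d → ℝ) m * Ω x 0 m k * (Pi.single j 1 : Fin d → ℝ) k := by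
          refine Finset.sum_congr rfl fun m _ => Finset.sum_congr rfl fun k _ => ?_
          rw [hJ0, hJ0, hx0]
      _ = Ω x 0 i j := by
          simp [Pi.single_apply, ite_mul, mul_ite, Finset.sum_ite_eq, Finset.sum_ite_eq']
end

section
/- (Viscous extension of Cauchy's theorem.) Let u be a smooth solution of the incompressible Navier–Stokes equations with viscosity 1/Re, ξ its flow map, and Ω_{ij} = u_{i,j} - u_{j,i}. Then ∂_t(ξ_{m,i} Ω_{mk}(ξ(x,t),t) ξ_{k,j}) = (1/Re) ξ_{m,i} (ΔΩ)_{mk}(ξ(x,t),t) ξ_{k,j}. -/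
namespace Stmt19Aux

noncomputable def D {d : ℕ} (f : ((Fin d → ℝ) × ℝ) → ℝ) (w : (Fin d → ℝ) × ℝ) :
    ((Fin d → ℝ) × ℝ) → ℝ := fun p => fderiv ℝ f p w

def Ex {d : ℕ} (l : Fin d) : (Fin d → ℝ) × ℝ := (Pi.single l 1, 0)

def Et {d : ℕ} : (Fin d → ℝ) × ℝ := (0, 1)

variable {d : ℕ}

lemma smooth_D {f : ((Fin d → ℝ) × ℝ) → ℝ} (hf : ContDiff ℝ (⊤ : ℕ∞) f)
    (w : (Fin d → ℝ) × ℝ) : ContDiff ℝ (⊤ : ℕ∞) (D f w) := by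
  have h1 : ContDiff ℝ (⊤ : ℕ∞) (fderiv ℝ f) := hf.fderiv_right (by simp)
  exact h1.clm_apply contDiff_const

lemma D_eval {f : ((Fin d → ℝ) × ℝ) → ℝ} (hf : ContDiff ℝ (⊤ : ℕ∞) f)
    (w w' p : (Fin d → ℝ) × ℝ) :
    fderiv ℝ (D f w) p w' = fderiv ℝ (fderiv ℝ f) p w' w := by
  have h1 : ContDiff ℝ (⊤ : ℕ∞) (fderiv ℝ f) := hf.fderiv_right (by simp)
  have h2 : DifferentiableAt ℝ (fderiv ℝ f) p := (h1.differentiable (by simp)) p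
  have h4 : HasFDerivAt (fun q => fderiv ℝ f q w)
      ((ContinuousLinearMap.apply ℝ ℝ w).comp (fderiv ℝ (fderiv ℝ f) p)) p :=
    (ContinuousLinearMap.apply ℝ ℝ w).hasFDerivAt.comp p h2.hasFDerivAt
  rw [show D f w = fun q => fderiv ℝ f q w from rfl, h4.fderiv]
  rfl

lemma D_symm {f : ((Fin d → ℝ) × ℝ) → ℝ} (hf : ContDiff ℝ (⊤ : ℕ∞) f)
    (w w' p : (Fin d → ℝ) × ℝ) :
    D (D f w) w' p = D (D f w') w p := by
  show fderiv ℝ (D f w) p w' = fderiv ℝ (D f w') p w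
  rw [D_eval hf, D_eval hf]
  exact (hf.contDiffAt.isSymmSndFDerivAt (by rw [minSmoothness_of_isRCLikeNormedField]; exact WithTop.coe_le_coe.2 le_top)) w' w

lemma slice_x {F : Type*} [NormedAddCommGroup F] [NormedSpace ℝ F]
    {f : ((Fin d → ℝ) × ℝ) → F} {x : Fin d → ℝ} {t : ℝ}
    (hf : DifferentiableAt ℝ f (x, t)) (w : Fin d → ℝ) :
    fderiv ℝ (fun y => f (y, t)) x w = fderiv ℝ f (x, t) (w, 0) := by
  have hγ : HasFDerivAt (fun y : Fin d → ℝ => (y, t))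
      ((ContinuousLinearMap.id ℝ (Fin d → ℝ)).prod 0) x :=
    (hasFDerivAt_id x).prodMk (hasFDerivAt_const t x)
  have h := (hf.hasFDerivAt.comp x hγ).fderiv
  rw [show (fun y : Fin d → ℝ => f (y, t)) = f ∘ (fun y => (y, t)) from rfl, h]
  rfl

lemma slice_t {F : Type*} [NormedAddCommGroup F] [NormedSpace ℝ F]
    {f : ((Fin d → ℝ) × ℝ) → F} {x : Fin d → ℝ} {t : ℝ}
    (hf : DifferentiableAt ℝ f (x, t)) :
    deriv (fun τ => f (x, τ)) t = fderiv ℝ f (x, t) (0, 1) := by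
  have hγ : HasDerivAt (fun τ : ℝ => ((x, τ) : (Fin d → ℝ) × ℝ)) (0, 1) t :=
    (hasDerivAt_const t x).prodMk (hasDerivAt_id t)
  exact (hf.hasFDerivAt.comp_hasDerivAt t hγ).deriv

lemma proj_fderiv {E : Type*} [NormedAddCommGroup E] [NormedSpace ℝ E]
    {f : E → (Fin d → ℝ)} {x : E} (hf : DifferentiableAt ℝ f x) (w : E) (a : Fin d) :
    fderiv ℝ f x w a = fderiv ℝ (fun y => f y a) x w := by
  have h := ((ContinuousLinearMap.proj (R := ℝ) (φ := fun _ : Fin d => ℝ) a).hasFDerivAt.comp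
    x hf.hasFDerivAt).fderiv
  rw [show (fun y => f y a) = (ContinuousLinearMap.proj (R := ℝ)
    (φ := fun _ : Fin d => ℝ) a : (Fin d → ℝ) →L[ℝ] ℝ) ∘ f from rfl, h]
  rfl

lemma lin_decomp (L : ((Fin d → ℝ) × ℝ) →L[ℝ] ℝ) (w : Fin d → ℝ) :
    L (w, 0) = ∑ l, w l * L (Ex l) := by
  have hw : ((w, (0:ℝ)) : (Fin d → ℝ) × ℝ)
      = ∑ l, w l • ((Pi.single l 1 : Fin d → ℝ), (0:ℝ)) := by
    apply Prod.ext
    · rw [Prod.fst_sum]; funext k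
      simp [Finset.sum_apply, Pi.single_apply, mul_ite]
    · rw [Prod.snd_sum]; simp
  rw [hw, map_sum]
  refine Finset.sum_congr rfl fun l _ => ?_
  rw [map_smul, smul_eq_mul]; rfl

lemma sum3_swap_ml (F : Fin d → Fin d → Fin d → ℝ) :
    ∑ m, ∑ k, ∑ l, F m k l = ∑ m, ∑ k, ∑ l, F l k m :=
  calc ∑ m, ∑ k, ∑ l, F m k l
      = ∑ m, ∑ l, ∑ k, F m k l := Finset.sum_congr rfl fun _ _ => Finset.sum_comm
    _ = ∑ l, ∑ m, ∑ k, F m k l := Finset.sum_comm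
    _ = ∑ l, ∑ k, ∑ m, F m k l := Finset.sum_congr rfl fun _ _ => Finset.sum_comm

lemma sum3_swap_kl (F : Fin d → Fin d → Fin d → ℝ) :
    ∑ m, ∑ k, ∑ l, F m k l = ∑ m, ∑ k, ∑ l, F m l k :=
  Finset.sum_congr rfl fun _ _ => Finset.sum_comm

lemma algebra_key (ν : ℝ) (g jv : Fin d → Fin d → ℝ)
    (dd : Fin d → Fin d → Fin d → ℝ) (i j : Fin d) :
    ∑ m, ∑ k, ((∑ l, g m l * jv l i) * (g m k - g k m) * jv k j
      + jv m i * ((ν * ∑ l, dd m k l) - ∑ l, (g l k * g m l - g l m * g k l)) * jv k j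
      + jv m i * (g m k - g k m) * (∑ l, g k l * jv l j))
    = ν * ∑ m, ∑ k, jv m i * (∑ l, dd m k l) * jv k j := by
  have h1 : ∀ m k : Fin d,
      (∑ l, g m l * jv l i) * (g m k - g k m) * jv k j
        + jv m i * ((ν * ∑ l, dd m k l) - ∑ l, (g l k * g m l - g l m * g k l)) * jv k j
        + jv m i * (g m k - g k m) * (∑ l, g k l * jv l j)
      = (∑ l, g m l * jv l i * (g m k - g k m) * jv k j)
        + (∑ l, jv m i * (ν * dd m k l - (g l k * g m l - g l m * g k l)) * jv k j)
        + (∑ l, jv m i * (g m k - g k m) * (g k l * jv l j)) := by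
    intro m k
    congr 1
    · congr 1
      · rw [Finset.sum_mul, Finset.sum_mul]
      · rw [← Finset.sum_mul, ← Finset.mul_sum]
        congr 2
        rw [Finset.mul_sum, ← Finset.sum_sub_distrib]
    · rw [Finset.mul_sum]
  have h2 : ν * ∑ m, ∑ k, jv m i * (∑ l, dd m k l) * jv k j
      = ∑ m, ∑ k, ∑ l, ν * (jv m i * dd m k l * jv k j) := by
    rw [Finset.mul_sum]
    refine Finset.sum_congr rfl fun m _ => ?_
    rw [Finset.mul_sum]
    refine Finset.sum_congr rfl fun k _ => ?_
    rw [show jv m i * (∑ l, dd m k l) * jv k j = ∑ l, jv m i * dd m k l * jv k j from by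
      rw [Finset.mul_sum, Finset.sum_mul], Finset.mul_sum]
  simp only [h1]
  simp only [Finset.sum_add_distrib]
  rw [sum3_swap_ml (fun m k l => g m l * jv l i * (g m k - g k m) * jv k j),
      sum3_swap_kl (fun m k l => jv m i * (g m k - g k m) * (g k l * jv l j)), h2]
  simp only [← Finset.sum_add_distrib]
  refine Finset.sum_congr rfl fun m _ => Finset.sum_congr rfl fun k _ =>
    Finset.sum_congr rfl fun l _ => ?_
  ring

end Stmt19Aux

open Stmt19Aux in
/-- Viscous extension of Cauchy's theorem: for a smooth incompressible Navier–Stokes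
solution with viscosity `1/Re`,
`∂ₜ(ξ_{m,i} Ω_{mk}(ξ,t) ξ_{k,j}) = (1/Re) ξ_{m,i} (ΔΩ)_{mk}(ξ,t) ξ_{k,j}`. -/
theorem stmt19 (d : ℕ) (Re : ℝ) (hRe : 0 < Re)
    (u : (Fin d → ℝ) → ℝ → (Fin d → ℝ)) (pr : (Fin d → ℝ) → ℝ → ℝ)
    (hu : ContDiff ℝ (⊤ : ℕ∞) (fun p : (Fin d → ℝ) × ℝ => u p.1 p.2))
    (hpr : ContDiff ℝ (⊤ : ℕ∞) (fun p : (Fin d → ℝ) × ℝ => pr p.1 p.2))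
    (hns : ∀ (x : Fin d → ℝ) (t : ℝ) (i : Fin d),
      deriv (fun τ => u x τ i) t
        + ∑ j, u x t j * fderiv ℝ (fun y => u y t i) x (Pi.single j 1)
      = -(fderiv ℝ (fun y => pr y t) x (Pi.single i 1))
        + (1/Re) * ∑ l, fderiv ℝ (fun y =>
            fderiv ℝ (fun z => u z t i) y (Pi.single l 1)) x (Pi.single l 1))
    (hdiv : ∀ (x : Fin d → ℝ) (t : ℝ),
      ∑ i, fderiv ℝ (fun y => u y t i) x (Pi.single i 1) = 0)
    (ξ : (Fin d → ℝ) → ℝ → (Fin d → ℝ))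
    (hξ : ContDiff ℝ (⊤ : ℕ∞) (fun p : (Fin d → ℝ) × ℝ => ξ p.1 p.2))
    (hflow : ∀ (x : Fin d → ℝ) (t : ℝ), HasDerivAt (fun τ => ξ x τ) (u (ξ x t) t) t)
    (hinit : ∀ x, ξ x 0 = x) :
    let Ω : (Fin d → ℝ) → ℝ → Fin d → Fin d → ℝ := fun x t i j =>
      fderiv ℝ (fun y => u y t i) x (Pi.single j 1)
        - fderiv ℝ (fun y => u y t j) x (Pi.single i 1)
    let ΔΩ : (Fin d → ℝ) → ℝ → Fin d → Fin d → ℝ := fun x t i j =>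
      ∑ l, fderiv ℝ (fun y => fderiv ℝ (fun z =>
        (fderiv ℝ (fun w => u w t i) z (Pi.single j 1)
          - fderiv ℝ (fun w => u w t j) z (Pi.single i 1)))
        y (Pi.single l 1)) x (Pi.single l 1)
    let J : (Fin d → ℝ) → ℝ → Fin d → Fin d → ℝ := fun x t i j =>
      fderiv ℝ (fun y => ξ y t) x (Pi.single j 1) i
    ∀ (x : Fin d → ℝ) (t : ℝ) (i j : Fin d),
      deriv (fun τ => ∑ m, ∑ k, J x τ m i * Ω (ξ x τ) τ m k * J x τ k j) t
        = (1/Re) * ∑ m, ∑ k, J x t m i * ΔΩ (ξ x t) t m k * J x t k j := by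
  intro Ω ΔΩ J x t i j
  -- basic functions
  set v : Fin d → ((Fin d → ℝ) × ℝ) → ℝ := fun a p => u p.1 p.2 a with hv_def
  set X : Fin d → ((Fin d → ℝ) × ℝ) → ℝ := fun a p => ξ p.1 p.2 a with hX_def
  set q : ((Fin d → ℝ) × ℝ) → ℝ := fun p => pr p.1 p.2 with hq_def
  have hv : ∀ a, ContDiff ℝ (⊤ : ℕ∞) (v a) := fun a => contDiff_pi.1 hu a
  have hX : ∀ a, ContDiff ℝ (⊤ : ℕ∞) (X a) := fun a => contDiff_pi.1 hξ a
  have hq : ContDiff ℝ (⊤ : ℕ∞) q := hpr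
  set W : Fin d → Fin d → ((Fin d → ℝ) × ℝ) → ℝ :=
    fun a b p => D (v a) (Ex b) p - D (v b) (Ex a) p with hW_def
  have hW : ∀ a b, ContDiff ℝ (⊤ : ℕ∞) (W a b) :=
    fun a b => (smooth_D (hv a) (Ex b)).sub (smooth_D (hv b) (Ex a))
  -- translations
  have hT1 : ∀ (y : Fin d → ℝ) (s : ℝ) (a b : Fin d),
      fderiv ℝ (fun z => u z s a) y (Pi.single b 1) = D (v a) (Ex b) (y, s) := by
    intro y s a b
    exact slice_x (((hv a).differentiable (by simp)) (y, s)) (Pi.single b 1)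
  have hT2 : ∀ (y : Fin d → ℝ) (s : ℝ) (a : Fin d),
      deriv (fun τ => u y τ a) s = D (v a) Et (y, s) := by
    intro y s a
    exact slice_t (((hv a).differentiable (by simp)) (y, s))
  have hT3 : ∀ (y : Fin d → ℝ) (s : ℝ) (a b c : Fin d),
      fderiv ℝ (fun z => fderiv ℝ (fun z' => u z' s a) z (Pi.single b 1)) y (Pi.single c 1)
        = D (D (v a) (Ex b)) (Ex c) (y, s) := by
    intro y s a b c
    have h : (fun z => fderiv ℝ (fun z' => u z' s a) z (Pi.single b 1))
        = (fun z => D (v a) (Ex b) (z, s)) := funext fun z => hT1 z s a b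
    rw [h]
    exact slice_x (((smooth_D (hv a) (Ex b)).differentiable (by simp)) (y, s)) (Pi.single c 1)
  have hTpr : ∀ (y : Fin d → ℝ) (s : ℝ) (a : Fin d),
      fderiv ℝ (fun z => pr z s) y (Pi.single a 1) = D q (Ex a) (y, s) := by
    intro y s a
    exact slice_x ((hq.differentiable (by simp)) (y, s)) (Pi.single a 1)
  have hTJ : ∀ (y : Fin d → ℝ) (s : ℝ) (a b : Fin d),
      fderiv ℝ (fun z => ξ z s) y (Pi.single b 1) a = D (X a) (Ex b) (y, s) := by
    intro y s a b
    have hd : DifferentiableAt ℝ (fun z => ξ z s) y := by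
      have h1 : DifferentiableAt ℝ (fun p : (Fin d → ℝ) × ℝ => ξ p.1 p.2) (y, s) :=
        (hξ.differentiable (by simp)) (y, s)
      exact h1.comp y ((show DifferentiableAt ℝ (fun z : Fin d → ℝ => (z, s)) y by fun_prop))
    rw [proj_fderiv hd (Pi.single b 1) a]
    exact slice_x (((hX a).differentiable (by simp)) (y, s)) (Pi.single b 1)
  -- differentiability helpers
  have hdv : ∀ a, Differentiable ℝ (v a) := fun a => (hv a).differentiable (by simp)
  have hdG : ∀ a w, Differentiable ℝ (D (v a) w) :=
    fun a w => (smooth_D (hv a) w).differentiable (by simp)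
  have hdGG : ∀ a w w', Differentiable ℝ (D (D (v a) w) w') :=
    fun a w w' => (smooth_D (smooth_D (hv a) w) w').differentiable (by simp)
  have hdq : ∀ w, Differentiable ℝ (D q w) :=
    fun w => (smooth_D hq w).differentiable (by simp)
  -- Navier–Stokes in D form
  have hns' : ∀ (p : (Fin d → ℝ) × ℝ) (a : Fin d),
      D (v a) Et p + ∑ b, v b p * D (v a) (Ex b) p
      = -(D q (Ex a) p) + (1/Re) * ∑ l, D (D (v a) (Ex l)) (Ex l) p := by
    intro p a
    have hT3' : ∀ (y : Fin d → ℝ) (s : ℝ) (a b c : Fin d),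
        fderiv ℝ (fun z => D (v a) (Ex b) (z, s)) y (Pi.single c 1)
          = D (D (v a) (Ex b)) (Ex c) (y, s) := fun y s a b c =>
      slice_x (((smooth_D (hv a) (Ex b)).differentiable (by simp)) (y, s)) (Pi.single c 1)
    have h := hns p.1 p.2 a
    simp only [hT1, hT2, hTpr, hT3'] at h
    exact h
  -- differentiated Navier–Stokes
  have hns2 : ∀ (p : (Fin d → ℝ) × ℝ) (a c : Fin d),
      D (D (v a) Et) (Ex c) p
        + ∑ b, (D (v b) (Ex c) p * D (v a) (Ex b) p + v b p * D (D (v a) (Ex b)) (Ex c) p)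
      = -(D (D q (Ex a)) (Ex c) p)
        + (1/Re) * ∑ l, D (D (D (v a) (Ex l)) (Ex l)) (Ex c) p := by
    intro p a c
    have hfe : (fun p => D (v a) Et p + ∑ b, v b p * D (v a) (Ex b) p)
        = (fun p => -(D q (Ex a) p) + (1/Re) * ∑ l, D (D (v a) (Ex l)) (Ex l) p) :=
      funext fun p => hns' p a
    have h0 := congrArg (fun f => fderiv ℝ f p (Ex c)) hfe
    have hdsum : DifferentiableAt ℝ (fun p => ∑ b, v b p * D (v a) (Ex b) p) p :=
      DifferentiableAt.fun_sum fun b _ => ((hdv b) p).mul ((hdG a (Ex b)) p)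
    have hdsum2 : DifferentiableAt ℝ (fun p => ∑ l, D (D (v a) (Ex l)) (Ex l) p) p :=
      DifferentiableAt.fun_sum fun l _ => (hdGG a (Ex l) (Ex l)) p
    have hL : fderiv ℝ (fun p => D (v a) Et p + ∑ b, v b p * D (v a) (Ex b) p) p (Ex c)
        = D (D (v a) Et) (Ex c) p
          + ∑ b, (D (v b) (Ex c) p * D (v a) (Ex b) p + v b p * D (D (v a) (Ex b)) (Ex c) p) := by
      rw [fderiv_fun_add ((hdG a Et) p) hdsum, ContinuousLinearMap.add_apply]
      congr 1
      rw [fderiv_fun_sum (fun b _ => ((hdv b) p).fun_mul ((hdG a (Ex b)) p)),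
        ContinuousLinearMap.sum_apply]
      refine Finset.sum_congr rfl fun b _ => ?_
      rw [fderiv_fun_mul ((hdv b) p) ((hdG a (Ex b)) p), ContinuousLinearMap.add_apply,
        ContinuousLinearMap.smul_apply, ContinuousLinearMap.smul_apply, smul_eq_mul,
        smul_eq_mul]
      rw [show fderiv ℝ (D (v a) (Ex b)) p (Ex c) = D (D (v a) (Ex b)) (Ex c) p from rfl,
        show fderiv ℝ (v b) p (Ex c) = D (v b) (Ex c) p from rfl]
      ring
    have hR : fderiv ℝ (fun p => -(D q (Ex a) p) + (1/Re) * ∑ l, D (D (v a) (Ex l)) (Ex l) p)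
          p (Ex c)
        = -(D (D q (Ex a)) (Ex c) p)
          + (1/Re) * ∑ l, D (D (D (v a) (Ex l)) (Ex l)) (Ex c) p := by
      rw [fderiv_fun_add ((hdq (Ex a)) p).fun_neg (hdsum2.const_mul _), ContinuousLinearMap.add_apply]
      congr 1
      · rw [fderiv_fun_neg, ContinuousLinearMap.neg_apply]
        rfl
      · rw [fderiv_const_mul hdsum2, ContinuousLinearMap.smul_apply, smul_eq_mul]
        congr 1
        rw [fderiv_fun_sum (fun l _ => (hdGG a (Ex l) (Ex l)) p), ContinuousLinearMap.sum_apply]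
        exact Finset.sum_congr rfl fun l _ => rfl
    rw [hL, hR] at h0
    exact h0
  -- D applied to differences
  have hDsub : ∀ (a b : Fin d) (w : (Fin d → ℝ) × ℝ) (p : (Fin d → ℝ) × ℝ),
      D (W a b) w p = D (D (v a) (Ex b)) w p - D (D (v b) (Ex a)) w p := by
    intro a b w p
    show fderiv ℝ (fun p => D (v a) (Ex b) p - D (v b) (Ex a) p) p w = _
    rw [fderiv_fun_sub ((hdG a (Ex b)) p) ((hdG b (Ex a)) p), ContinuousLinearMap.sub_apply]
    rfl
  have hDDsub : ∀ (a b : Fin d) (w w' : (Fin d → ℝ) × ℝ) (p : (Fin d → ℝ) × ℝ),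
      D (D (W a b) w) w' p
        = D (D (D (v a) (Ex b)) w) w' p - D (D (D (v b) (Ex a)) w) w' p := by
    intro a b w w' p
    have hfun : D (W a b) w
        = fun p' => D (D (v a) (Ex b)) w p' - D (D (v b) (Ex a)) w p' :=
      funext fun p' => hDsub a b w p'
    show fderiv ℝ (D (W a b) w) p w' = _
    rw [hfun, fderiv_fun_sub ((hdGG a (Ex b) w) p) ((hdGG b (Ex a) w) p),
      ContinuousLinearMap.sub_apply]
    rfl
  -- third derivative swap
  have h3swap : ∀ (a : Fin d) (c l : Fin d) (p : (Fin d → ℝ) × ℝ),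
      D (D (D (v a) (Ex c)) (Ex l)) (Ex l) p
        = D (D (D (v a) (Ex l)) (Ex l)) (Ex c) p := by
    intro a c l p
    have h1 : D (D (D (v a) (Ex l)) (Ex l)) (Ex c) p
        = D (D (D (v a) (Ex l)) (Ex c)) (Ex l) p :=
      D_symm (smooth_D (hv a) (Ex l)) (Ex l) (Ex c) p
    have h2 : D (D (v a) (Ex l)) (Ex c) = D (D (v a) (Ex c)) (Ex l) :=
      funext fun p' => D_symm (hv a) (Ex l) (Ex c) p'
    rw [h1, h2]
  -- vorticity transport equation
  have hvort : ∀ (p : (Fin d → ℝ) × ℝ) (m k : Fin d),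
      D (W m k) Et p + ∑ l, v l p * D (W m k) (Ex l) p
        + ∑ l, (D (v l) (Ex k) p * D (v m) (Ex l) p - D (v l) (Ex m) p * D (v k) (Ex l) p)
      = (1/Re) * ∑ l, D (D (W m k) (Ex l)) (Ex l) p := by
    intro p m k
    have e1 : D (W m k) Et p
        = D (D (v m) Et) (Ex k) p - D (D (v k) Et) (Ex m) p := by
      rw [hDsub, D_symm (hv m) (Ex k) Et p, D_symm (hv k) (Ex m) Et p]
    have e2 : ∑ l, v l p * D (W m k) (Ex l) p
        = (∑ b, v b p * D (D (v m) (Ex b)) (Ex k) p)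
          - (∑ b, v b p * D (D (v k) (Ex b)) (Ex m) p) := by
      rw [← Finset.sum_sub_distrib]
      refine Finset.sum_congr rfl fun l _ => ?_
      rw [hDsub, D_symm (hv m) (Ex k) (Ex l) p, D_symm (hv k) (Ex m) (Ex l) p]
      ring
    have e3 : ∑ b, (D (v b) (Ex k) p * D (v m) (Ex b) p
          + v b p * D (D (v m) (Ex b)) (Ex k) p)
        = (∑ b, D (v b) (Ex k) p * D (v m) (Ex b) p)
          + ∑ b, v b p * D (D (v m) (Ex b)) (Ex k) p := Finset.sum_add_distrib
    have e4 : ∑ b, (D (v b) (Ex m) p * D (v k) (Ex b) p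
          + v b p * D (D (v k) (Ex b)) (Ex m) p)
        = (∑ b, D (v b) (Ex m) p * D (v k) (Ex b) p)
          + ∑ b, v b p * D (D (v k) (Ex b)) (Ex m) p := Finset.sum_add_distrib
    have e5 : ∑ l, (D (v l) (Ex k) p * D (v m) (Ex l) p
          - D (v l) (Ex m) p * D (v k) (Ex l) p)
        = (∑ b, D (v b) (Ex k) p * D (v m) (Ex b) p)
          - ∑ b, D (v b) (Ex m) p * D (v k) (Ex b) p := Finset.sum_sub_distrib _ _
    have e6 : D (D q (Ex m)) (Ex k) p = D (D q (Ex k)) (Ex m) p :=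
      D_symm hq (Ex m) (Ex k) p
    have e7 : ∑ l, D (D (W m k) (Ex l)) (Ex l) p
        = (∑ l, D (D (D (v m) (Ex l)) (Ex l)) (Ex k) p)
          - ∑ l, D (D (D (v k) (Ex l)) (Ex l)) (Ex m) p := by
      rw [← Finset.sum_sub_distrib]
      refine Finset.sum_congr rfl fun l _ => ?_
      rw [hDDsub, h3swap m k l p, h3swap k m l p]
    rw [e1, e2, e5, e7]
    linear_combination (hns2 p m k) - (hns2 p k m) - e3 + e4 - e6
  -- time derivative of the flow map equals the velocity (componentwise, in D form)
  have hξfull : Differentiable ℝ (fun p : (Fin d → ℝ) × ℝ => ξ p.1 p.2) :=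
    hξ.differentiable (by simp)
  have hXt : ∀ m : Fin d, D (X m) Et = fun p => v m (ξ p.1 p.2, p.2) := by
    intro m
    funext p
    have h1 : deriv (fun τ => X m (p.1, τ)) p.2 = fderiv ℝ (X m) (p.1, p.2) (0, 1) :=
      slice_t (((hX m).differentiable (by simp)) (p.1, p.2))
    have h2 : HasDerivAt (fun τ => ξ p.1 τ m) (u (ξ p.1 p.2) p.2 m) p.2 :=
      (hasDerivAt_pi.1 (hflow p.1 p.2)) m
    have h3 : fderiv ℝ (X m) (p.1, p.2) (0, 1) = u (ξ p.1 p.2) p.2 m := by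
      rw [← h1]; exact h2.deriv
    exact h3
  -- Cauchy's formula: time derivative of the Jacobian
  have hJt : ∀ (m a : Fin d), HasDerivAt (fun τ => D (X m) (Ex a) (x, τ))
      (∑ l, D (v m) (Ex l) (ξ x t, t) * D (X l) (Ex a) (x, t)) t := by
    intro m a
    have hγ : HasDerivAt (fun τ : ℝ => ((x, τ) : (Fin d → ℝ) × ℝ)) (0, 1) t :=
      (hasDerivAt_const t x).prodMk (hasDerivAt_id t)
    have hd1 : HasDerivAt (fun τ => D (X m) (Ex a) (x, τ))
        (fderiv ℝ (D (X m) (Ex a)) (x, t) (0, 1)) t :=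
      ((((smooth_D (hX m) (Ex a)).differentiable (by simp)) (x, t)).hasFDerivAt).comp_hasDerivAt
        t hγ
    have hΦ : HasFDerivAt (fun p : (Fin d → ℝ) × ℝ => ((ξ p.1 p.2, p.2) : (Fin d → ℝ) × ℝ))
        ((fderiv ℝ (fun p : (Fin d → ℝ) × ℝ => ξ p.1 p.2) (x, t)).prod
          (ContinuousLinearMap.snd ℝ (Fin d → ℝ) ℝ)) (x, t) :=
      ((hξfull (x, t)).hasFDerivAt).prodMk hasFDerivAt_snd
    have hcomp : HasFDerivAt (fun p : (Fin d → ℝ) × ℝ => v m (ξ p.1 p.2, p.2))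
        ((fderiv ℝ (v m) (ξ x t, t)).comp
          ((fderiv ℝ (fun p : (Fin d → ℝ) × ℝ => ξ p.1 p.2) (x, t)).prod
            (ContinuousLinearMap.snd ℝ (Fin d → ℝ) ℝ))) (x, t) :=
      HasFDerivAt.comp (g := v m) (x, t) (((hdv m) (ξ x t, t)).hasFDerivAt) hΦ
    have s2 : D (D (X m) (Ex a)) Et (x, t) = D (D (X m) Et) (Ex a) (x, t) :=
      D_symm (hX m) (Ex a) Et (x, t)
    have s4 : D (D (X m) Et) (Ex a) (x, t)
        = fderiv ℝ (v m) (ξ x t, t)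
            (fderiv ℝ (fun p : (Fin d → ℝ) × ℝ => ξ p.1 p.2) (x, t) (Ex a), 0) := by
      show fderiv ℝ (D (X m) Et) (x, t) (Ex a) = _
      rw [hXt m, hcomp.fderiv, ContinuousLinearMap.comp_apply]
      congr 1
    have s6 : ∀ l, fderiv ℝ (fun p : (Fin d → ℝ) × ℝ => ξ p.1 p.2) (x, t) (Ex a) l
        = D (X l) (Ex a) (x, t) := fun l => proj_fderiv (hξfull (x, t)) (Ex a) l
    have hval : fderiv ℝ (D (X m) (Ex a)) (x, t) (0, 1)
        = ∑ l, D (v m) (Ex l) (ξ x t, t) * D (X l) (Ex a) (x, t) := by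
      rw [show fderiv ℝ (D (X m) (Ex a)) (x, t) (0, 1) = D (D (X m) (Ex a)) Et (x, t)
          from rfl, s2, s4, lin_decomp]
      refine Finset.sum_congr rfl fun l _ => ?_
      rw [s6 l]
      exact mul_comm _ _
    exact hval ▸ hd1
  -- transport of W along the flow
  have hΩt : ∀ (m k : Fin d), HasDerivAt (fun τ => W m k (ξ x τ, τ))
      (D (W m k) Et (ξ x t, t)
        + ∑ l, v l (ξ x t, t) * D (W m k) (Ex l) (ξ x t, t)) t := by
    intro m k
    have hc : HasDerivAt (fun τ : ℝ => ((ξ x τ, τ) : (Fin d → ℝ) × ℝ)) (u (ξ x t) t, 1) t :=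
      (hflow x t).prodMk (hasDerivAt_id t)
    have h1 := HasFDerivAt.comp_hasDerivAt (f := fun τ : ℝ => ((ξ x τ, τ) : (Fin d → ℝ) × ℝ))
      t ((((hW m k).differentiable (by simp)) (ξ x t, t)).hasFDerivAt) hc
    have hsplit : ((u (ξ x t) t, 1) : (Fin d → ℝ) × ℝ) = (u (ξ x t) t, 0) + (0, 1) := by
      apply Prod.ext <;> simp
    have h2 : fderiv ℝ (W m k) (ξ x t, t) (u (ξ x t) t, 1)
        = D (W m k) Et (ξ x t, t)
          + ∑ l, v l (ξ x t, t) * D (W m k) (Ex l) (ξ x t, t) := by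
      rw [hsplit, map_add, lin_decomp]
      exact add_comm _ _
    exact h2 ▸ h1
  -- unfolding the let-definitions
  have hJdef : J = fun x t i j => fderiv ℝ (fun y => ξ y t) x (Pi.single j 1) i := rfl
  have hΩdef : Ω = fun x t i j =>
      fderiv ℝ (fun y => u y t i) x (Pi.single j 1)
        - fderiv ℝ (fun y => u y t j) x (Pi.single i 1) := rfl
  have hΔdef : ΔΩ = fun x t i j =>
      ∑ l, fderiv ℝ (fun y => fderiv ℝ (fun z =>
        (fderiv ℝ (fun w => u w t i) z (Pi.single j 1)
          - fderiv ℝ (fun w => u w t j) z (Pi.single i 1)))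
        y (Pi.single l 1)) x (Pi.single l 1) := rfl
  have hWp : ∀ (a b : Fin d) (p : (Fin d → ℝ) × ℝ),
      W a b p = D (v a) (Ex b) p - D (v b) (Ex a) p := fun a b p => rfl
  -- translation of ΔΩ
  have hTΔ : ∀ (y : Fin d → ℝ) (s : ℝ) (m k : Fin d),
      (∑ l, fderiv ℝ (fun y' => fderiv ℝ (fun z =>
          (fderiv ℝ (fun w => u w s m) z (Pi.single k 1)
            - fderiv ℝ (fun w => u w s k) z (Pi.single m 1)))
        y' (Pi.single l 1)) y (Pi.single l 1))
      = ∑ l, D (D (W m k) (Ex l)) (Ex l) (y, s) := by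
    intro y s m k
    refine Finset.sum_congr rfl fun l _ => ?_
    have hinner : (fun z => fderiv ℝ (fun w => u w s m) z (Pi.single k 1)
          - fderiv ℝ (fun w => u w s k) z (Pi.single m 1))
        = fun z => W m k (z, s) := by
      funext z
      rw [hT1 z s m k, hT1 z s k m]
    rw [hinner]
    have hmid : (fun y' => fderiv ℝ (fun z => W m k (z, s)) y' (Pi.single l 1))
        = fun y' => D (W m k) (Ex l) (y', s) :=
      funext fun y' => slice_x (((hW m k).differentiable (by simp)) (y', s)) _
    rw [hmid]
    exact slice_x (((smooth_D (hW m k) (Ex l)).differentiable (by simp)) (y, s)) _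
  -- rewrite the function under the time derivative
  have hfun : (fun τ => ∑ m, ∑ k, J x τ m i * Ω (ξ x τ) τ m k * J x τ k j)
      = fun τ => ∑ m, ∑ k,
          D (X m) (Ex i) (x, τ) * W m k (ξ x τ, τ) * D (X k) (Ex j) (x, τ) := by
    funext τ
    simp only [hJdef, hΩdef]
    refine Finset.sum_congr rfl fun m _ => Finset.sum_congr rfl fun k _ => ?_
    rw [hTJ x τ m i, hTJ x τ k j, hT1 (ξ x τ) τ m k, hT1 (ξ x τ) τ k m]
  -- derivative of the product sum
  have hD : HasDerivAt (fun τ => ∑ m, ∑ k,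
        D (X m) (Ex i) (x, τ) * W m k (ξ x τ, τ) * D (X k) (Ex j) (x, τ))
      (∑ m, ∑ k,
        (((∑ l, D (v m) (Ex l) (ξ x t, t) * D (X l) (Ex i) (x, t)) * W m k (ξ x t, t)
          + D (X m) (Ex i) (x, t) * (D (W m k) Et (ξ x t, t)
            + ∑ l, v l (ξ x t, t) * D (W m k) (Ex l) (ξ x t, t)))
            * D (X k) (Ex j) (x, t)
          + D (X m) (Ex i) (x, t) * W m k (ξ x t, t)
            * (∑ l, D (v k) (Ex l) (ξ x t, t) * D (X l) (Ex j) (x, t)))) t :=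
    HasDerivAt.fun_sum fun m _ => HasDerivAt.fun_sum fun k _ =>
      (((hJt m i).fun_mul (hΩt m k)).fun_mul (hJt k j))
  -- rewrite the right-hand side
  have hgoalR : (1/Re) * ∑ m, ∑ k, J x t m i * ΔΩ (ξ x t) t m k * J x t k j
      = (1/Re) * ∑ m, ∑ k, D (X m) (Ex i) (x, t)
          * (∑ l, D (D (W m k) (Ex l)) (Ex l) (ξ x t, t)) * D (X k) (Ex j) (x, t) := by
    congr 1
    refine Finset.sum_congr rfl fun m _ => Finset.sum_congr rfl fun k _ => ?_
    simp only [hJdef, hΔdef]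
    rw [hTJ x t m i, hTJ x t k j, hTΔ (ξ x t) t m k]
  -- rearranged vorticity equation
  have hvort' : ∀ (m k : Fin d),
      D (W m k) Et (ξ x t, t) + ∑ l, v l (ξ x t, t) * D (W m k) (Ex l) (ξ x t, t)
      = (1/Re) * (∑ l, D (D (W m k) (Ex l)) (Ex l) (ξ x t, t))
        - ∑ l, (D (v l) (Ex k) (ξ x t, t) * D (v m) (Ex l) (ξ x t, t)
          - D (v l) (Ex m) (ξ x t, t) * D (v k) (Ex l) (ξ x t, t)) := by
    intro m k
    linarith [hvort (ξ x t, t) m k]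
  rw [hfun, hD.deriv, hgoalR]
  calc ∑ m, ∑ k,
        (((∑ l, D (v m) (Ex l) (ξ x t, t) * D (X l) (Ex i) (x, t)) * W m k (ξ x t, t)
          + D (X m) (Ex i) (x, t) * (D (W m k) Et (ξ x t, t)
            + ∑ l, v l (ξ x t, t) * D (W m k) (Ex l) (ξ x t, t)))
            * D (X k) (Ex j) (x, t)
          + D (X m) (Ex i) (x, t) * W m k (ξ x t, t)
            * (∑ l, D (v k) (Ex l) (ξ x t, t) * D (X l) (Ex j) (x, t)))
      = ∑ m, ∑ k,
        ((∑ l, D (v m) (Ex l) (ξ x t, t) * D (X l) (Ex i) (x, t))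
            * (D (v m) (Ex k) (ξ x t, t) - D (v k) (Ex m) (ξ x t, t))
            * D (X k) (Ex j) (x, t)
          + D (X m) (Ex i) (x, t)
            * (((1/Re) * ∑ l, D (D (W m k) (Ex l)) (Ex l) (ξ x t, t))
              - ∑ l, (D (v l) (Ex k) (ξ x t, t) * D (v m) (Ex l) (ξ x t, t)
                - D (v l) (Ex m) (ξ x t, t) * D (v k) (Ex l) (ξ x t, t)))
            * D (X k) (Ex j) (x, t)
          + D (X m) (Ex i) (x, t)
            * (D (v m) (Ex k) (ξ x t, t) - D (v k) (Ex m) (ξ x t, t))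
            * (∑ l, D (v k) (Ex l) (ξ x t, t) * D (X l) (Ex j) (x, t))) := by
        refine Finset.sum_congr rfl fun m _ => Finset.sum_congr rfl fun k _ => ?_
        rw [hWp m k (ξ x t, t), hvort' m k]
        ring
    _ = (1/Re) * ∑ m, ∑ k, D (X m) (Ex i) (x, t)
          * (∑ l, D (D (W m k) (Ex l)) (Ex l) (ξ x t, t)) * D (X k) (Ex j) (x, t) :=
        algebra_key (1/Re) (fun a b => D (v a) (Ex b) (ξ x t, t))
          (fun a b => D (X a) (Ex b) (x, t))
          (fun m k l => D (D (W m k) (Ex l)) (Ex l) (ξ x t, t)) i j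
end
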